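/- Let (Ω, 𝒜) be a standard Borel space carrying a measurable flow θ and a stationary probability measure P, and let T be an invariant random transport on ℝ^d (T(ω, · × ℝ^d) locally finite, T(ω, (B + x) × (C + x)) = T(θ_x ω, B × C)) such that Φ := T(·, · × ℝ^d) has finite intensity γ. Then the random measure Ψ := T(·, ℝ^d × ·) is P-almost surely locally finite, and Ψ has intensity γ, i.e. E[T(ℝ^d × B)] = γ λ_d(B) for every Borel set B ⊆ ℝ^d. -/

import Mathlib

open MeasureTheory Filter Set ProbabilityTheory
open scoped ENNReal NNReal Topology Pointwise

noncomputable section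

/-- Euclidean space `ℝ^d`. -/
abbrev Euc (d : ℕ) : Type := EuclideanSpace ℝ (Fin d)

/-- The unit cube `[0,1]^d`. -/
def unitCube (d : ℕ) : Set (Euc d) := {x | ∀ i, x i ∈ Icc (0 : ℝ) 1}

/-- The half-open unit cube `[0,1)^d`. -/
def cubeIco (d : ℕ) : Set (Euc d) := {x | ∀ i, x i ∈ Ico (0 : ℝ) 1}

/-- A measurable flow on `Ω` indexed by `ℝ^d`. -/
def IsFlow {d : ℕ} {Ω : Type*} [MeasurableSpace Ω] (θ : Euc d → Ω → Ω) : Prop :=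
  Measurable (fun p : Euc d × Ω => θ p.1 p.2) ∧ θ 0 = id ∧ ∀ x y, θ x ∘ θ y = θ (x + y)

/-- A random measure is invariant under the flow `θ`:
`Φ(θ_x ω, B) = Φ(ω, B + x)`, where `B + x = {y | y - x ∈ B}`. -/
def InvariantRM {d : ℕ} {Ω : Type*} (θ : Euc d → Ω → Ω) (Φ : Ω → Measure (Euc d)) : Prop :=
  ∀ ω (x : Euc d) (B : Set (Euc d)), MeasurableSet B →
    Φ (θ x ω) B = Φ ω ((fun y => y - x) ⁻¹' B)

/-- Stationarity of a random measure: for each `x`, the random measure `B ↦ Φ(B + x)`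
has the same distribution as `Φ`. -/
def StationaryRM {d : ℕ} {Ω : Type*} [MeasurableSpace Ω] (P : Measure Ω)
    (Φ : Ω → Measure (Euc d)) : Prop :=
  ∀ x : Euc d,
    Measure.map (fun ω => Measure.map (fun y => y - x) (Φ ω)) P = Measure.map Φ P

/-- Local square-integrability: `E[Φ(B)²] < ∞` for every bounded Borel set `B`. -/
def LocSqInt {d : ℕ} {Ω : Type*} [MeasurableSpace Ω] (P : Measure Ω)
    (Φ : Ω → Measure (Euc d)) : Prop :=
  ∀ B : Set (Euc d), MeasurableSet B → Bornology.IsBounded B →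
    ∫⁻ ω, (Φ ω B) ^ 2 ∂P < ⊤

/-- `Φ` has intensity `γ`, i.e. `E[Φ([0,1]^d)] = γ`. -/
def HasIntensity {d : ℕ} {Ω : Type*} [MeasurableSpace Ω] (P : Measure Ω)
    (Φ : Ω → Measure (Euc d)) (γ : ℝ≥0∞) : Prop :=
  ∫⁻ ω, Φ ω (unitCube d) ∂P = γ

/-- `α` is the reduced second moment measure of `Φ`:
`α(B) = E[∫∫ 1{x ∈ [0,1]^d, y - x ∈ B} Φ(dy) Φ(dx)]`. -/
def IsReducedSecondMoment {d : ℕ} {Ω : Type*} [MeasurableSpace Ω] (P : Measure Ω)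
    (Φ : Ω → Measure (Euc d)) (α : Measure (Euc d)) : Prop :=
  ∀ B : Set (Euc d), MeasurableSet B →
    α B = ∫⁻ ω, ∫⁻ x in unitCube d, Φ ω ((fun y => y - x) ⁻¹' B) ∂(Φ ω) ∂P

/-- An invariant probability kernel from `Ω × ℝ^d` to `ℝ^d`:
jointly measurable, probability-valued and `K(ω, x, B + x) = K(θ_x ω, 0, B)`. -/
def IsInvariantKernel {d : ℕ} {Ω : Type*} [MeasurableSpace Ω]
    (θ : Euc d → Ω → Ω) (K : Ω → Euc d → Measure (Euc d)) : Prop :=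
  Measurable (fun p : Ω × Euc d => K p.1 p.2) ∧
  (∀ ω x, IsProbabilityMeasure (K ω x)) ∧
  ∀ ω (x : Euc d) (B : Set (Euc d)), MeasurableSet B →
    K ω x ((fun y => y - x) ⁻¹' B) = K (θ x ω) 0 B

/-- The destination `KΦ(ω, ·) = ∫ K(ω, x, ·) Φ(ω, dx)`. -/
def transported {d : ℕ} {Ω : Type*} [MeasurableSpace Ω] (K : Ω → Euc d → Measure (Euc d))
    (Φ : Ω → Measure (Euc d)) (ω : Ω) : Measure (Euc d) :=
  (Φ ω).bind (K ω)

/-- The recentred kernel `K*(ω, x, B) := K(ω, x, B + x)`. -/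
def recenter {d : ℕ} {Ω : Type*} (K : Ω → Euc d → Measure (Euc d)) (ω : Ω) (x : Euc d) :
    Measure (Euc d) :=
  Measure.map (fun y => y - x) (K ω x)

/-- Total variation norm between two measures: `‖μ − ν‖ = 2 sup_A |μ(A) − ν(A)|`. -/
def tvDist {X : Type*} [MeasurableSpace X] (μ ν : Measure X) : ℝ≥0∞ :=
  2 * ⨆ (A : Set X) (_ : MeasurableSet A), max (μ A - ν A) (ν A - μ A)

/-- Variance of the (extended-real-valued) random variable `f` under `P`. -/
def rVar {Ω : Type*} [MeasurableSpace Ω] (P : Measure Ω) (f : Ω → ℝ≥0∞) : ℝ :=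
  (∫ ω, ((f ω).toReal) ^ 2 ∂P) - (∫ ω, (f ω).toReal ∂P) ^ 2

/-- `Ψ` has asymptotic variance `c` with respect to the window `W`:
`Var[Ψ(rW)] / λ_d(rW) → c` as `r → ∞`. -/
def HasAsymptoticVariance {d : ℕ} {Ω : Type*} [MeasurableSpace Ω] (P : Measure Ω)
    (Ψ : Ω → Measure (Euc d)) (W : Set (Euc d)) (c : ℝ) : Prop :=
  Tendsto (fun r : ℝ => rVar P (fun ω => Ψ ω (r • W)) / (volume (r • W)).toReal)
    atTop (𝓝 c)

/-- Hyperuniformity with respect to `W`: vanishing asymptotic variance. -/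
def Hyperuniform {d : ℕ} {Ω : Type*} [MeasurableSpace Ω] (P : Measure Ω)
    (Ψ : Ω → Measure (Euc d)) (W : Set (Euc d)) : Prop :=
  HasAsymptoticVariance P Ψ W 0

/-- `W ∈ 𝒦₀`: bounded convex set containing `0` in its interior. -/
def IsK0 {d : ℕ} (W : Set (Euc d)) : Prop :=
  Convex ℝ W ∧ Bornology.IsBounded W ∧ (0 : Euc d) ∈ interior W

/-- A set `W` is Fourier smooth: `|𝟙_W^(k)| ≤ c (1 + ‖k‖)^{-(d+ϑ)/2}`. -/
def FourierSmooth {d : ℕ} (W : Set (Euc d)) : Prop :=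
  ∃ c t : ℝ, 0 < c ∧ 0 < t ∧ ∀ k : Euc d,
    ‖∫ x in W, Complex.exp (-((inner ℝ k x : ℝ) : ℂ) * Complex.I)‖ ≤
      c * (1 + ‖k‖) ^ (-(((d : ℝ) + t) / 2))

/-- `P0` is the Palm probability measure of `Φ`:
`γ P0(A) = E[∫ 1{θ_x ω ∈ A} 1{x ∈ [0,1]^d} Φ(ω, dx)]`. -/
def IsPalm {d : ℕ} {Ω : Type*} [MeasurableSpace Ω] (P : Measure Ω) (θ : Euc d → Ω → Ω)
    (Φ : Ω → Measure (Euc d)) (γ : ℝ≥0∞) (P0 : Measure Ω) : Prop :=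
  IsProbabilityMeasure P0 ∧
  ∀ A : Set Ω, MeasurableSet A →
    γ * P0 A = ∫⁻ ω, ∫⁻ x in unitCube d, A.indicator (fun _ => (1 : ℝ≥0∞)) (θ x ω) ∂(Φ ω) ∂P

/-- `P2` is a two-point Palm kernel of `Φ` (with reduced second moment measure `α`). -/
def IsTwoPointPalm {d : ℕ} {Ω : Type*} [MeasurableSpace Ω] (P : Measure Ω)
    (θ : Euc d → Ω → Ω) (Φ : Ω → Measure (Euc d)) (α : Measure (Euc d))
    (P2 : Euc d → Measure Ω) : Prop :=
  (∀ y, IsProbabilityMeasure (P2 y)) ∧ Measurable P2 ∧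
  ∀ f : Euc d → Euc d → Ω → ℝ≥0∞,
    Measurable (fun p : Euc d × Euc d × Ω => f p.1 p.2.1 p.2.2) →
    ∫⁻ ω, ∫⁻ x, ∫⁻ y, f x (y - x) (θ x ω) ∂(Φ ω) ∂(Φ ω) ∂P =
      ∫⁻ x, ∫⁻ y, ∫⁻ ω, f x y ω ∂(P2 y) ∂α ∂(volume : Measure (Euc d))

/-- Tilted convolution `ν ⋆ ν' = ∫∫ 1{x − y ∈ ·} ν(dx) ν'(dy)`. -/
def tconv {d : ℕ} (μ ν : Measure (Euc d)) : Measure (Euc d) :=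
  Measure.map (fun p : Euc d × Euc d => p.1 - p.2) (μ.prod ν)

/-- A measure on `ℝ^d` is purely discrete (purely atomic). -/
def PurelyDiscrete {d : ℕ} (μ : Measure (Euc d)) : Prop :=
  μ {x | μ {x} = 0} = 0

/-- A stationary family of `ℝ^d`-valued random vectors indexed by an additive group. -/
def IsStationaryFamily {ι Ω : Type*} [Add ι] [MeasurableSpace Ω] {d : ℕ}
    (P : Measure Ω) (Z : ι → Ω → Euc d) : Prop :=
  ∀ (v : ι) (n : ℕ) (x : Fin n → ι),
    Measure.map (fun ω (i : Fin n) => Z (x i + v) ω) P =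
      Measure.map (fun ω (i : Fin n) => Z (x i) ω) P

/-- A Gaussian family of `ℝ^d`-valued random vectors: every finite real linear
combination of coordinates is (possibly degenerate) Gaussian. -/
def IsGaussianFamily {ι Ω : Type*} [MeasurableSpace Ω] {d : ℕ}
    (P : Measure Ω) (Z : ι → Ω → Euc d) : Prop :=
  ∀ (n : ℕ) (x : Fin n → ι) (c : Fin n → Euc d), ∃ (m : ℝ) (v : ℝ≥0),
    Measure.map (fun ω => ∑ i, (inner ℝ (c i) (Z (x i) ω) : ℝ)) P = ProbabilityTheory.gaussianReal m v

/-- The cross-covariance matrix of two `ℝ^d`-valued random vectors. -/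
def covMat {Ω : Type*} [MeasurableSpace Ω] {d : ℕ} (P : Measure Ω) (X Y : Ω → Euc d) :
    Matrix (Fin d) (Fin d) ℝ :=
  Matrix.of fun i j => (∫ ω, X ω i * Y ω j ∂P) - (∫ ω, X ω i ∂P) * (∫ ω, Y ω j ∂P)

/-- The lattice point of `ℤ^d ⊆ ℝ^d` corresponding to `z`. -/
def latticePt (d : ℕ) (z : Fin d → ℤ) : Euc d :=
  (EuclideanSpace.equiv (Fin d) ℝ).symm (fun i => (z i : ℝ))

/-!
By stationarity of `P`, the source and destination intensity measures
`B ↦ E[T(B × ℝ^d)]` and `B ↦ E[T(ℝ^d × B)]` are translation invariant, so each is a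
multiple of Lebesgue measure as soon as it is finite on a set with nonempty interior; the source
one is `γ λ_d`. Split `ℝ^d` into the lattice cells `z + [0,1)^d`. Shifting by `z` shows that the
expected mass sent from cell `z` to cell `0` equals the expected mass sent from cell `0` to
cell `-z`; summing over `z`, both intensity measures give `[0,1)^d` the same mass `γ`
(mass transport principle). Finiteness of `E[Ψ(K)]` for compact `K` then makes `Ψ` almost surely
locally finite.
-/

namespace EuclideanSpace

variable {ι : Type*}

lemma setOf_forall_mem_eq_preimage (s : ι → Set ℝ) :
    {x : EuclideanSpace ℝ ι | ∀ i, x i ∈ s i} =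
      (MeasurableEquiv.toLp 2 (ι → ℝ)).symm ⁻¹' univ.pi s := by
  ext x
  simp

lemma measurableSet_setOf_forall_mem [Countable ι] {s : ι → Set ℝ}
    (hs : ∀ i, MeasurableSet (s i)) :
    MeasurableSet {x : EuclideanSpace ℝ ι | ∀ i, x i ∈ s i} := by
  rw [setOf_forall_mem_eq_preimage]
  exact (MeasurableEquiv.toLp 2 (ι → ℝ)).symm.measurable (MeasurableSet.univ_pi hs)

lemma volume_setOf_forall_mem [Fintype ι] (s : ι → Set ℝ) :
    volume {x : EuclideanSpace ℝ ι | ∀ i, x i ∈ s i} = ∏ i, volume (s i) := by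
  rw [setOf_forall_mem_eq_preimage,
    (volume_preserving_symm_measurableEquiv_toLp ι).measure_preimage_equiv, volume_pi_pi]

lemma isOpen_setOf_forall_mem [Finite ι] {s : ι → Set ℝ} (hs : ∀ i, IsOpen (s i)) :
    IsOpen {x : EuclideanSpace ℝ ι | ∀ i, x i ∈ s i} := by
  simp only [ofPred_forall]
  exact isOpen_iInter_of_finite fun i => (hs i).preimage (PiLp.continuous_apply 2 _ i)

end EuclideanSpace

open EuclideanSpace

lemma interior_nonempty_of_setOf_forall_mem_Ioo_subset {d : ℕ} {s : Set (Euc d)}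
    (h : {x : Euc d | ∀ i, x i ∈ Ioo (0 : ℝ) 1} ⊆ s) : (interior s).Nonempty :=
  ⟨WithLp.toLp 2 fun _ => 1 / 2, interior_maximal h (isOpen_setOf_forall_mem fun _ => isOpen_Ioo)
    fun _ => by norm_num⟩

lemma volume_unitCube (d : ℕ) : volume (unitCube d) = 1 := by
  rw [unitCube, volume_setOf_forall_mem]
  simp

lemma volume_cubeIco (d : ℕ) : volume (cubeIco d) = 1 := by
  rw [cubeIco, volume_setOf_forall_mem]
  simp

lemma measurableSet_unitCube (d : ℕ) : MeasurableSet (unitCube d) :=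
  measurableSet_setOf_forall_mem fun _ => measurableSet_Icc

lemma measurableSet_cubeIco (d : ℕ) : MeasurableSet (cubeIco d) :=
  measurableSet_setOf_forall_mem fun _ => measurableSet_Ico

lemma interior_unitCube_nonempty (d : ℕ) : (interior (unitCube d)).Nonempty :=
  interior_nonempty_of_setOf_forall_mem_Ioo_subset fun _ hx i => Ioo_subset_Icc_self (hx i)

lemma interior_cubeIco_nonempty (d : ℕ) : (interior (cubeIco d)).Nonempty :=
  interior_nonempty_of_setOf_forall_mem_Ioo_subset fun _ hx i => Ioo_subset_Ico_self (hx i)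

def latticeFloor (d : ℕ) (y : Euc d) : Fin d → ℤ := fun i => ⌊y i⌋

lemma measurable_latticeFloor (d : ℕ) : Measurable (latticeFloor d) :=
  measurable_pi_lambda _ fun i => Int.measurable_floor.comp (PiLp.continuous_apply 2 _ i).measurable

lemma latticeFloor_sub_latticePt {d : ℕ} (y : Euc d) (z : Fin d → ℤ) :
    latticeFloor d (y - latticePt d z) = latticeFloor d y - z :=
  funext fun i => Int.floor_sub_intCast (y i) (z i)

lemma latticeFloor_preimage_zero (d : ℕ) : latticeFloor d ⁻¹' {0} = cubeIco d := by
  ext y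
  simp [latticeFloor, cubeIco, funext_iff, Int.floor_eq_zero_iff]

lemma preimage_sub_latticePt_latticeFloor_preimage {d : ℕ} (z w : Fin d → ℤ) :
    (fun y => y - latticePt d z) ⁻¹' (latticeFloor d ⁻¹' {w}) =
      latticeFloor d ⁻¹' {w + z} := by
  ext y
  simp [latticeFloor_sub_latticePt, sub_eq_iff_eq_add]

section LatticePartition

variable {d : ℕ} {X : Type*} [MeasurableSpace X]

lemma tsum_measure_latticeFloor_preimage_prod (m : Measure (Euc d × X)) {B : Set X}
    (hB : MeasurableSet B) :
    ∑' z, m ((latticeFloor d ⁻¹' {z}) ×ˢ B) = m (univ ×ˢ B) := by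
  rw [← measure_iUnion (fun z w hzw => (pairwise_disjoint_fiber _ hzw).set_prod_left B B)
      fun z => (measurable_latticeFloor d (measurableSet_singleton z)).prod hB,
    ← iUnion_prod_const, ← preimage_iUnion, iUnion_of_singleton, preimage_univ]

lemma tsum_measure_prod_latticeFloor_preimage (m : Measure (X × Euc d)) {A : Set X}
    (hA : MeasurableSet A) :
    ∑' z, m (A ×ˢ (latticeFloor d ⁻¹' {z})) = m (A ×ˢ univ) := by
  rw [← measure_iUnion (fun z w hzw => (pairwise_disjoint_fiber _ hzw).set_prod_right A A)
      fun z => hA.prod (measurable_latticeFloor d (measurableSet_singleton z)),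
    ← prod_iUnion, ← preimage_iUnion, iUnion_of_singleton, preimage_univ]

end LatticePartition

section HaarUniqueness

variable {G : Type*} [TopologicalSpace G] [AddGroup G] [IsTopologicalAddGroup G]
  [MeasurableSpace G] [BorelSpace G]

lemma isLocallyFiniteMeasure_of_isAddLeftInvariant (ρ : Measure G) [ρ.IsAddLeftInvariant]
    {s : Set G} (hs : ρ s ≠ ⊤) (hint : (interior s).Nonempty) : IsLocallyFiniteMeasure ρ := by
  obtain ⟨y, hy⟩ := hint
  refine ⟨fun x => ⟨(fun z => (y - x) + z) ⁻¹' s, ?_, ?_⟩⟩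
  · refine (continuous_const_add _).continuousAt.preimage_mem_nhds ?_
    simpa using mem_interior_iff_mem_nhds.1 hy
  · rw [measure_preimage_add]
    exact hs.lt_top

lemma eq_smul_of_isAddLeftInvariant [LocallyCompactSpace G] [SecondCountableTopology G]
    (ρ μ : Measure G) [μ.IsAddHaarMeasure] [ρ.IsAddLeftInvariant] {s : Set G}
    (hs : ρ s ≠ ⊤) (hint : (interior s).Nonempty) (hμs : μ s = 1) : ρ = ρ s • μ := by
  have := isLocallyFiniteMeasure_of_isAddLeftInvariant ρ hs hint
  have hρ := Measure.isAddLeftInvariant_eq_smul ρ μ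
  have hρs : ρ s = Measure.addHaarScalarFactor ρ μ := by
    conv_lhs => rw [hρ]
    simp [hμs]
  rw [hρs]
  exact hρ

end HaarUniqueness

section RandomMeasure

variable {Ω : Type*} [MeasurableSpace Ω] {P : Measure Ω}

lemma ae_isLocallyFiniteMeasure_of_bind {X : Type*} [TopologicalSpace X]
    [WeaklyLocallyCompactSpace X] [SigmaCompactSpace X] [T2Space X] [MeasurableSpace X]
    [OpensMeasurableSpace X] {Ψ : Ω → Measure X} (hΨ : Measurable Ψ)
    [IsFiniteMeasureOnCompacts (P.bind Ψ)] : ∀ᵐ ω ∂P, IsLocallyFiniteMeasure (Ψ ω) := by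
  let K := CompactExhaustion.choice X
  have hK : ∀ n, ∀ᵐ ω ∂P, Ψ ω (K n) < ⊤ := fun n =>
    ae_lt_top ((Measure.measurable_coe (K.isCompact n).measurableSet).comp hΨ) <| by
      rw [← Measure.bind_apply (K.isCompact n).measurableSet hΨ.aemeasurable]
      exact (K.isCompact n).measure_lt_top.ne
  filter_upwards [ae_all_iff.2 hK] with ω hω
  exact ⟨fun x => ⟨K (K.find x + 1),
    mem_interior_iff_mem_nhds.1 (K.subset_interior_succ _ (K.mem_find x)), hω _⟩⟩

section Marginals

variable {X Y : Type*} [MeasurableSpace X] [MeasurableSpace Y] {T : Ω → Measure (X × Y)}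

lemma bind_map_fst_apply (hTm : Measurable T) {A : Set X} (hA : MeasurableSet A) :
    (P.bind fun ω => (T ω).map Prod.fst) A = ∫⁻ ω, T ω (A ×ˢ univ) ∂P := by
  have hm : Measurable fun ω => (T ω).map Prod.fst :=
    (Measure.measurable_map _ measurable_fst).comp hTm
  rw [Measure.bind_apply hA hm.aemeasurable]
  simp_rw [Measure.map_apply measurable_fst hA, prod_univ]

lemma bind_map_snd_apply (hTm : Measurable T) {B : Set Y} (hB : MeasurableSet B) :
    (P.bind fun ω => (T ω).map Prod.snd) B = ∫⁻ ω, T ω (univ ×ˢ B) ∂P := by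
  have hm : Measurable fun ω => (T ω).map Prod.snd :=
    (Measure.measurable_map _ measurable_snd).comp hTm
  rw [Measure.bind_apply hB hm.aemeasurable]
  simp_rw [Measure.map_apply measurable_snd hB, univ_prod]

end Marginals

variable {d : ℕ} {θ : Euc d → Ω → Ω}

lemma InvariantRM.isAddLeftInvariant_bind {Φ : Ω → Measure (Euc d)} (hΦ : InvariantRM θ Φ)
    (hΦm : Measurable Φ) (hθ : ∀ x, MeasurePreserving (θ x) P P) :
    (P.bind Φ).IsAddLeftInvariant := by
  refine ⟨fun x => Measure.ext fun C hC => ?_⟩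
  have hC' : (x + ·) ⁻¹' C = (· - -x) ⁻¹' C := by
    ext y
    simp [add_comm]
  rw [Measure.map_apply (measurable_const_add x) hC, Measure.bind_apply hC hΦm.aemeasurable,
    Measure.bind_apply (measurable_const_add x hC) hΦm.aemeasurable, hC']
  simp_rw [← hΦ _ _ C hC]
  exact (hθ (-x)).lintegral_comp ((Measure.measurable_coe hC).comp hΦm)

end RandomMeasure

section InvariantTransport

variable {d : ℕ} {Ω : Type*} {θ : Euc d → Ω → Ω} {T : Ω → Measure (Euc d × Euc d)}

def IsInvariantTransport (θ : Euc d → Ω → Ω) (T : Ω → Measure (Euc d × Euc d)) : Prop :=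
  ∀ ω (x : Euc d) (B C : Set (Euc d)), MeasurableSet B → MeasurableSet C →
    T ω (((fun y => y - x) ⁻¹' B) ×ˢ ((fun y => y - x) ⁻¹' C)) = T (θ x ω) (B ×ˢ C)

lemma IsInvariantTransport.invariantRM_map_fst (hT : IsInvariantTransport θ T) :
    InvariantRM θ fun ω => (T ω).map Prod.fst := by
  intro ω x B hB
  rw [Measure.map_apply measurable_fst hB,
    Measure.map_apply measurable_fst (measurable_sub_const x hB), ← prod_univ, ← prod_univ,
    ← hT ω x B univ hB .univ, preimage_univ]

lemma IsInvariantTransport.invariantRM_map_snd (hT : IsInvariantTransport θ T) :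
    InvariantRM θ fun ω => (T ω).map Prod.snd := by
  intro ω x B hB
  rw [Measure.map_apply measurable_snd hB,
    Measure.map_apply measurable_snd (measurable_sub_const x hB), ← univ_prod, ← univ_prod,
    ← hT ω x univ B .univ hB, preimage_univ]

lemma IsInvariantTransport.bind_map_snd_cubeIco_eq_bind_map_fst [MeasurableSpace Ω] {P : Measure Ω}
    (hT : IsInvariantTransport θ T) (hTm : Measurable T)
    (hθ : ∀ x, MeasurePreserving (θ x) P P) :
    (P.bind fun ω => (T ω).map Prod.snd) (cubeIco d) =
      (P.bind fun ω => (T ω).map Prod.fst) (cubeIco d) := by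
  let Q z := latticeFloor d ⁻¹' {z}
  have hQ z : MeasurableSet (Q z) := measurable_latticeFloor d (measurableSet_singleton z)
  have hTS S (hS : MeasurableSet S) : Measurable fun ω => T ω S :=
    (Measure.measurable_coe hS).comp hTm
  have hshift z : ∫⁻ ω, T ω (Q z ×ˢ Q 0) ∂P = ∫⁻ ω, T ω (Q 0 ×ˢ Q (-z)) ∂P := by
    have h ω := hT ω (latticePt d z) (Q 0) (Q (-z)) (hQ 0) (hQ _)
    simp only [Q, preimage_sub_latticePt_latticeFloor_preimage, zero_add,
      neg_add_cancel] at h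
    simp_rw [Q, h]
    exact (hθ _).lintegral_comp (hTS _ ((hQ 0).prod (hQ _)))
  rw [bind_map_snd_apply hTm (measurableSet_cubeIco d),
    bind_map_fst_apply hTm (measurableSet_cubeIco d), ← latticeFloor_preimage_zero]
  calc ∫⁻ ω, T ω (univ ×ˢ Q 0) ∂P = ∫⁻ ω, ∑' z, T ω (Q z ×ˢ Q 0) ∂P :=
        lintegral_congr fun ω => (tsum_measure_latticeFloor_preimage_prod _ (hQ 0)).symm
    _ = ∑' z, ∫⁻ ω, T ω (Q z ×ˢ Q 0) ∂P :=
        lintegral_tsum fun z => (hTS _ ((hQ z).prod (hQ 0))).aemeasurable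
    _ = ∑' z, ∫⁻ ω, T ω (Q 0 ×ˢ Q (-z)) ∂P := tsum_congr hshift
    _ = ∑' z, ∫⁻ ω, T ω (Q 0 ×ˢ Q z) ∂P :=
        (Equiv.neg (Fin d → ℤ)).tsum_eq fun z => ∫⁻ ω, T ω (Q 0 ×ˢ Q z) ∂P
    _ = ∫⁻ ω, ∑' z, T ω (Q 0 ×ˢ Q z) ∂P :=
        (lintegral_tsum fun z => (hTS _ ((hQ 0).prod (hQ z))).aemeasurable).symm
    _ = ∫⁻ ω, T ω (Q 0 ×ˢ univ) ∂P :=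
        lintegral_congr fun ω => tsum_measure_prod_latticeFloor_preimage _ (hQ 0)

end InvariantTransport

theorem transport_destination_intensity_general
    {d : ℕ} {Ω : Type} [MeasurableSpace Ω]
    (P : Measure Ω)
    (θ : Euc d → Ω → Ω) (hθ : IsFlow θ)
    (hPθ : ∀ x : Euc d, Measure.map (θ x) P = P)
    (T : Ω → Measure (Euc d × Euc d)) (hTm : Measurable T)
    (hTinv : ∀ ω (x : Euc d) (B C : Set (Euc d)), MeasurableSet B → MeasurableSet C →
      T ω (((fun y => y - x) ⁻¹' B) ×ˢ ((fun y => y - x) ⁻¹' C)) = T (θ x ω) (B ×ˢ C))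
    (γ : ℝ≥0∞) (hγfin : γ < ⊤)
    (hγ : ∫⁻ ω, Measure.map Prod.fst (T ω) (unitCube d) ∂P = γ) :
    (∀ᵐ ω ∂P, IsLocallyFiniteMeasure (Measure.map Prod.snd (T ω))) ∧
    (∀ B : Set (Euc d), MeasurableSet B →
      ∫⁻ ω, T ω ((univ : Set (Euc d)) ×ˢ B) ∂P = γ * volume B) := by
  have hθP x : MeasurePreserving (θ x) P P := ⟨hθ.1.comp measurable_prodMk_left, hPθ x⟩
  have hT : IsInvariantTransport θ T := hTinv
  have hΦm : Measurable fun ω => (T ω).map Prod.fst :=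
    (Measure.measurable_map _ measurable_fst).comp hTm
  have hΨm : Measurable fun ω => (T ω).map Prod.snd :=
    (Measure.measurable_map _ measurable_snd).comp hTm
  set μ := P.bind fun ω => (T ω).map Prod.fst
  set ν := P.bind fun ω => (T ω).map Prod.snd
  have : μ.IsAddLeftInvariant := hT.invariantRM_map_fst.isAddLeftInvariant_bind hΦm hθP
  have : ν.IsAddLeftInvariant := hT.invariantRM_map_snd.isAddLeftInvariant_bind hΨm hθP
  have hμ_cube : μ (unitCube d) = γ :=
    (Measure.bind_apply (measurableSet_unitCube d) hΦm.aemeasurable).trans hγ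
  have hμ : μ = γ • volume := hμ_cube ▸ eq_smul_of_isAddLeftInvariant μ volume
    (hμ_cube ▸ hγfin.ne) (interior_unitCube_nonempty d) (volume_unitCube d)
  have hν_cube : ν (cubeIco d) = γ := by
    rw [show ν (cubeIco d) = μ (cubeIco d) from hT.bind_map_snd_cubeIco_eq_bind_map_fst hTm hθP, hμ,
      Measure.smul_apply, volume_cubeIco, smul_eq_mul, mul_one]
  have hν_cube_ne_top : ν (cubeIco d) ≠ ⊤ := hν_cube ▸ hγfin.ne
  have := isLocallyFiniteMeasure_of_isAddLeftInvariant ν hν_cube_ne_top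
    (interior_cubeIco_nonempty d)
  have hν : ν = γ • volume := hν_cube ▸ eq_smul_of_isAddLeftInvariant ν volume
    hν_cube_ne_top (interior_cubeIco_nonempty d) (volume_cubeIco d)
  refine ⟨ae_isLocallyFiniteMeasure_of_bind hΨm, fun B hB => ?_⟩
  rw [← bind_map_snd_apply hTm hB]
  exact congrArg (· B) hν

/-- Proposition: for an invariant random transport whose source has finite intensity `γ`,
the destination is almost surely locally finite and has intensity `γ`. -/
theorem transport_destination_intensity
    {d : ℕ} {Ω : Type} [MeasurableSpace Ω] [StandardBorelSpace Ω]
    (P : Measure Ω) [IsProbabilityMeasure P]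
    (θ : Euc d → Ω → Ω) (hθ : IsFlow θ)
    (hPθ : ∀ x : Euc d, Measure.map (θ x) P = P)
    (T : Ω → Measure (Euc d × Euc d)) (hTm : Measurable T)
    (hTlf : ∀ ω, IsLocallyFiniteMeasure (Measure.map Prod.fst (T ω)))
    (hTinv : ∀ ω (x : Euc d) (B C : Set (Euc d)), MeasurableSet B → MeasurableSet C →
      T ω (((fun y => y - x) ⁻¹' B) ×ˢ ((fun y => y - x) ⁻¹' C)) = T (θ x ω) (B ×ˢ C))
    (γ : ℝ≥0∞) (hγfin : γ < ⊤)
    (hγ : ∫⁻ ω, Measure.map Prod.fst (T ω) (unitCube d) ∂P = γ) :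
    (∀ᵐ ω ∂P, IsLocallyFiniteMeasure (Measure.map Prod.snd (T ω))) ∧
    (∀ B : Set (Euc d), MeasurableSet B →
      ∫⁻ ω, T ω ((univ : Set (Euc d)) ×ˢ B) ∂P = γ * volume B) :=
  transport_destination_intensity_general P θ hθ hPθ T hTm hTinv γ hγfin hγ
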